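/- In the multivariate Deffuant model, let T_* = inf { n ≥ 0 : ‖ξ_n(x) − ξ_n(y)‖ ∉ [τ/2, τ] for all x, y ∈ V }, let A be the event that there exists x ∈ V with sup_{c ∈ Δ} ‖ξ_{T_*}(x) − c‖ < τ, and let C = { lim_{n→∞} max_{x,y ∈ V} ‖ξ_n(x) − ξ_n(y)‖ = 0 } be the consensus event. Then, almost surely, A implies C (i.e., A ⊆ C up to a null event). -/

import Mathlib

section DeffuantAux

variable {d : ℕ} {nrm : (Fin d → ℝ) → ℝ}

lemma deff_nrm_zero (nrm_smul : ∀ (t : ℝ) (v : Fin d → ℝ), nrm (t • v) = |t| * nrm v) :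
    nrm 0 = 0 := by
  simpa using nrm_smul 0 0

lemma deff_nrm_nonneg (nrm_smul : ∀ (t : ℝ) (v : Fin d → ℝ), nrm (t • v) = |t| * nrm v)
    (nrm_triangle : ∀ v w : Fin d → ℝ, nrm (v + w) ≤ nrm v + nrm w) (v : Fin d → ℝ) :
    0 ≤ nrm v := by
  have h1 : nrm (v + (-1 : ℝ) • v) ≤ nrm v + |(-1 : ℝ)| * nrm v := by
    rw [← nrm_smul]; exact nrm_triangle _ _
  have h2 : v + (-1 : ℝ) • v = 0 := by module
  rw [h2, deff_nrm_zero nrm_smul] at h1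
  simp only [abs_neg, abs_one, one_mul] at h1
  linarith

lemma deff_nrm_sub_comm (nrm_smul : ∀ (t : ℝ) (v : Fin d → ℝ), nrm (t • v) = |t| * nrm v)
    (u v : Fin d → ℝ) : nrm (u - v) = nrm (v - u) := by
  have h : v - u = (-1 : ℝ) • (u - v) := by module
  rw [h, nrm_smul]; simp

lemma deff_nrm_conv (nrm_smul : ∀ (t : ℝ) (v : Fin d → ℝ), nrm (t • v) = |t| * nrm v)
    (nrm_triangle : ∀ v w : Fin d → ℝ, nrm (v + w) ≤ nrm v + nrm w)
    {θ : ℝ} (h0 : 0 ≤ θ) (h1 : θ ≤ 1) (u v : Fin d → ℝ) :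
    nrm (θ • u + (1 - θ) • v) ≤ θ * nrm u + (1 - θ) * nrm v := by
  calc nrm (θ • u + (1 - θ) • v) ≤ nrm (θ • u) + nrm ((1 - θ) • v) := nrm_triangle _ _
  _ = θ * nrm u + (1 - θ) * nrm v := by
      rw [nrm_smul, nrm_smul, abs_of_nonneg h0, abs_of_nonneg (by linarith)]

lemma deff_nrm_sum_le (nrm_smul : ∀ (t : ℝ) (v : Fin d → ℝ), nrm (t • v) = |t| * nrm v)
    (nrm_triangle : ∀ v w : Fin d → ℝ, nrm (v + w) ≤ nrm v + nrm w)
    {ι : Type*} (s : Finset ι) (f : ι → Fin d → ℝ) :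
    nrm (∑ i ∈ s, f i) ≤ ∑ i ∈ s, nrm (f i) := by
  classical
  induction s using Finset.cons_induction with
  | empty => simp [deff_nrm_zero nrm_smul]
  | cons a s ha ih =>
      rw [Finset.sum_cons, Finset.sum_cons]
      exact (nrm_triangle _ _).trans (by linarith)

lemma deff_nrm_decomp (nrm_smul : ∀ (t : ℝ) (v : Fin d → ℝ), nrm (t • v) = |t| * nrm v)
    (nrm_triangle : ∀ v w : Fin d → ℝ, nrm (v + w) ≤ nrm v + nrm w)
    (v : Fin d → ℝ) :
    nrm v ≤ ∑ i : Fin d, |v i| * nrm (fun j => if i = j then 1 else 0) := by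
  conv_lhs => rw [pi_eq_sum_univ v]
  refine (deff_nrm_sum_le nrm_smul nrm_triangle _ _).trans (le_of_eq ?_)
  exact Finset.sum_congr rfl fun i _ => nrm_smul _ _

/-- One step of the Deffuant dynamics. -/
def DefStep {d : ℕ} (nrm : (Fin d → ℝ) → ℝ) (τ μ : ℝ) {V : Type} (a b : V → Fin d → ℝ)
    (p : V × V) : Prop :=
  (nrm (a p.1 - a p.2) ≤ τ →
    b p.1 = a p.1 + μ • (a p.2 - a p.1) ∧ b p.2 = a p.2 + μ • (a p.1 - a p.2) ∧
      ∀ z, z ≠ p.1 → z ≠ p.2 → b z = a z) ∧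
  (τ < nrm (a p.1 - a p.2) → ∀ z, b z = a z)

variable {V : Type} {τ μ : ℝ} {a b : V → Fin d → ℝ} {p : V × V}

lemma DefStep.cases (h : DefStep nrm τ μ a b p) :
    (∀ z, b z = a z) ∨
    (b p.1 = (1 - μ) • a p.1 + μ • a p.2 ∧ b p.2 = (1 - μ) • a p.2 + μ • a p.1 ∧
      ∀ z, z ≠ p.1 → z ≠ p.2 → b z = a z) := by
  rcases le_or_gt (nrm (a p.1 - a p.2)) τ with hle | hlt
  · obtain ⟨h1, h2, h3⟩ := h.1 hle
    exact Or.inr ⟨by rw [h1]; module, by rw [h2]; module, h3⟩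
  · exact Or.inl (h.2 hlt)

lemma DefStep.ball (nrm_smul : ∀ (t : ℝ) (v : Fin d → ℝ), nrm (t • v) = |t| * nrm v)
    (nrm_triangle : ∀ v w : Fin d → ℝ, nrm (v + w) ≤ nrm v + nrm w)
    (hμ0 : 0 ≤ μ) (hμ1 : μ ≤ 1) (h : DefStep nrm τ μ a b p)
    {c : Fin d → ℝ} {r : ℝ} (hb : ∀ z, nrm (a z - c) ≤ r) : ∀ z, nrm (b z - c) ≤ r := by
  have key : ∀ u v : V, nrm (((1 - μ) • a u + μ • a v) - c) ≤ r := by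
    intro u v
    have h2 : (1 - μ) • (a u - c) + (1 - (1 - μ)) • (a v - c)
        = ((1 - μ) • a u + μ • a v) - c := by
      have hμ : (1 : ℝ) - (1 - μ) = μ := by ring
      rw [hμ]; module
    have h3 := deff_nrm_conv nrm_smul nrm_triangle (θ := 1 - μ) (by linarith) (by linarith)
      (a u - c) (a v - c)
    rw [h2] at h3
    have := hb u; have := hb v
    nlinarith
  intro z
  rcases h.cases with hall | ⟨h1, h2, h3⟩
  · rw [hall z]; exact hb z
  · by_cases hz1 : z = p.1
    · rw [hz1, h1]; exact key _ _
    · by_cases hz2 : z = p.2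
      · rw [hz2, h2]; exact key _ _
      · rw [h3 z hz1 hz2]; exact hb z

lemma DefStep.upper (hμ0 : 0 ≤ μ) (hμ1 : μ ≤ 1) (h : DefStep nrm τ μ a b p)
    (j : Fin d) {M : ℝ} (hM : ∀ z, a z j ≤ M) : ∀ z, b z j ≤ M := by
  have key : ∀ u v : V, ((1 - μ) • a u + μ • a v) j ≤ M := by
    intro u v
    have : ((1 - μ) • a u + μ • a v) j = (1 - μ) * a u j + μ * a v j := by
      simp [Pi.add_apply, Pi.smul_apply, smul_eq_mul]
    rw [this]
    nlinarith [hM u, hM v]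
  intro z
  rcases h.cases with hall | ⟨h1, h2, h3⟩
  · rw [hall z]; exact hM z
  · by_cases hz1 : z = p.1
    · rw [hz1, h1]; exact key _ _
    · by_cases hz2 : z = p.2
      · rw [hz2, h2]; exact key _ _
      · rw [h3 z hz1 hz2]; exact hM z

lemma DefStep.lower (hμ0 : 0 ≤ μ) (hμ1 : μ ≤ 1) (h : DefStep nrm τ μ a b p)
    (j : Fin d) {m : ℝ} (hm : ∀ z, m ≤ a z j) : ∀ z, m ≤ b z j := by
  have key : ∀ u v : V, m ≤ ((1 - μ) • a u + μ • a v) j := by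
    intro u v
    have : ((1 - μ) • a u + μ • a v) j = (1 - μ) * a u j + μ * a v j := by
      simp [Pi.add_apply, Pi.smul_apply, smul_eq_mul]
    rw [this]
    nlinarith [hm u, hm v]
  intro z
  rcases h.cases with hall | ⟨h1, h2, h3⟩
  · rw [hall z]; exact hm z
  · by_cases hz1 : z = p.1
    · rw [hz1, h1]; exact key _ _
    · by_cases hz2 : z = p.2
      · rw [hz2, h2]; exact key _ _
      · rw [h3 z hz1 hz2]; exact hm z

lemma DefStep.memΔ (hμ0 : 0 ≤ μ) (hμ1 : μ ≤ 1) {Δ : Set (Fin d → ℝ)} (hconv : Convex ℝ Δ)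
    (h : DefStep nrm τ μ a b p) (hmem : ∀ z, a z ∈ Δ) : ∀ z, b z ∈ Δ := by
  have key : ∀ u v : V, ((1 - μ) • a u + μ • a v) ∈ Δ := fun u v =>
    hconv (hmem u) (hmem v) (by linarith) hμ0 (by ring)
  intro z
  rcases h.cases with hall | ⟨h1, h2, h3⟩
  · rw [hall z]; exact hmem z
  · by_cases hz1 : z = p.1
    · rw [hz1, h1]; exact key _ _
    · by_cases hz2 : z = p.2
      · rw [hz2, h2]; exact key _ _
      · rw [h3 z hz1 hz2]; exact hmem z

lemma deff_contract (hμ0 : 0 < μ) (hμ2 : μ ≤ 1 / 2)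
    (η : ℕ → V → Fin d → ℝ) (ee : ℕ → V × V)
    (hstep : ∀ t, DefStep nrm τ μ (η t) (η (t + 1)) (ee t))
    (m L : ℕ) (w : ℕ → V)
    (hpat : ∀ i, i < L → ee (m + i) = (w i, w (i + 1)))
    (hint : ∀ i, i < L → nrm (η (m + i) (w i) - η (m + i) (w (i + 1))) ≤ τ)
    (j : Fin d) (M mm : ℝ) (hM : ∀ z, η m z j ≤ M) (hmm : ∀ z, mm ≤ η m z j) :
    ∀ i, i ≤ L → (∀ z, η (m + i) z j ≤ M ∧ mm ≤ η (m + i) z j) ∧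
      (∀ k, k ≤ i → η (m + i) (w k) j ≤ M - μ ^ i * (M - η m (w 0) j) ∧
        mm + μ ^ i * (η m (w 0) j - mm) ≤ η (m + i) (w k) j) := by
  have hμ1 : μ ≤ 1 := by linarith
  intro i
  induction i with
  | zero =>
      intro _
      refine ⟨fun z => ⟨hM z, hmm z⟩, fun k hk => ?_⟩
      interval_cases k
      constructor <;> simp <;> linarith [hM (w 0), hmm (w 0)]
  | succ i ih =>
      intro hsucc
      have hiL : i < L := Nat.lt_of_succ_le hsucc
      obtain ⟨IHg, IHv⟩ := ih (Nat.le_of_succ_le hsucc)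
      set c := η m (w 0) j with hc
      have hcM : c ≤ M := hM (w 0)
      have hcm : mm ≤ c := hmm (w 0)
      have hpow : 0 < μ ^ i := pow_pos hμ0 i
      have hstep' : DefStep nrm τ μ (η (m + i)) (η (m + i + 1)) (w i, w (i + 1)) := by
        rw [← hpat i hiL]; exact hstep (m + i)
      have hin : nrm (η (m + i) (w i) - η (m + i) (w (i + 1))) ≤ τ := hint i hiL
      obtain ⟨h1, h2, h3⟩ := hstep'.1 hin
      have hb1 : η (m + i + 1) (w i) j
          = η (m + i) (w i) j + μ * (η (m + i) (w (i + 1)) j - η (m + i) (w i) j) := by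
        have := congrFun h1 j
        simpa [Pi.add_apply, Pi.smul_apply, Pi.sub_apply, smul_eq_mul] using this
      have hb2 : η (m + i + 1) (w (i + 1)) j
          = η (m + i) (w (i + 1)) j + μ * (η (m + i) (w i) j - η (m + i) (w (i + 1)) j) := by
        have := congrFun h2 j
        simpa [Pi.add_apply, Pi.smul_apply, Pi.sub_apply, smul_eq_mul] using this
      have hglob : ∀ z, η (m + (i + 1)) z j ≤ M ∧ mm ≤ η (m + (i + 1)) z j := by
        intro z
        exact ⟨hstep'.upper (le_of_lt hμ0) hμ1 j (fun z => (IHg z).1) z,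
          hstep'.lower (le_of_lt hμ0) hμ1 j (fun z => (IHg z).2) z⟩
      refine ⟨hglob, fun k hk => ?_⟩
      have hAu : η (m + i) (w i) j ≤ M - μ ^ i * (M - c) := (IHv i le_rfl).1
      have hAl : mm + μ ^ i * (c - mm) ≤ η (m + i) (w i) j := (IHv i le_rfl).2
      have hBu : η (m + i) (w (i + 1)) j ≤ M := (IHg (w (i + 1))).1
      have hBl : mm ≤ η (m + i) (w (i + 1)) j := (IHg (w (i + 1))).2
      rw [pow_succ]
      have hrw : m + (i + 1) = m + i + 1 := by omega
      rw [hrw]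
      by_cases hk1 : w k = w (i + 1)
      · rw [hk1, hb2]
        constructor <;> nlinarith
      · have hk2 : k ≤ i := by
          have : k ≠ i + 1 := fun h => hk1 (by rw [h])
          omega
        by_cases hki : w k = w i
        · rw [hki, hb1]
          have e1 : (1 - μ) * ((M - μ ^ i * (M - c)) - η (m + i) (w i) j) ≥ 0 :=
            mul_nonneg (by linarith) (by linarith)
          have e2 : μ * (M - η (m + i) (w (i + 1)) j) ≥ 0 :=
            mul_nonneg (by linarith) (by linarith)
          have e3 : (1 - 2 * μ) * (μ ^ i * (M - c)) ≥ 0 :=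
            mul_nonneg (by linarith) (mul_nonneg hpow.le (by linarith))
          have f1 : (1 - μ) * (η (m + i) (w i) j - (mm + μ ^ i * (c - mm))) ≥ 0 :=
            mul_nonneg (by linarith) (by linarith)
          have f2 : μ * (η (m + i) (w (i + 1)) j - mm) ≥ 0 :=
            mul_nonneg (by linarith) (by linarith)
          have f3 : (1 - 2 * μ) * (μ ^ i * (c - mm)) ≥ 0 :=
            mul_nonneg (by linarith) (mul_nonneg hpow.le (by linarith))
          constructor <;> nlinarith
        · rw [h3 (w k) hki hk1]
          have g1 := (IHv k hk2).1
          have g2 := (IHv k hk2).2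
          have e1 : (μ ^ i * (M - c)) * (1 - μ) ≥ 0 :=
            mul_nonneg (mul_nonneg hpow.le (by linarith)) (by linarith)
          have e2 : (μ ^ i * (c - mm)) * (1 - μ) ≥ 0 :=
            mul_nonneg (mul_nonneg hpow.le (by linarith)) (by linarith)
          constructor <;> nlinarith

lemma deff_exists_cover_walk {V : Type} {G : SimpleGraph V} (hG : G.Connected) (a : V)
    (l : List V) : ∃ (b : V) (p : G.Walk a b), ∀ v ∈ l, v ∈ p.support := by
  induction l with
  | nil => exact ⟨a, SimpleGraph.Walk.nil, by simp⟩
  | cons v l ih =>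
      obtain ⟨b, p, hp⟩ := ih
      refine ⟨v, p.append (hG.preconnected b v).some, fun x hx => ?_⟩
      rw [SimpleGraph.Walk.mem_support_append_iff]
      rcases List.mem_cons.mp hx with h | h
      · exact Or.inr (h ▸ SimpleGraph.Walk.end_mem_support _)
      · exact Or.inl (hp x h)

end DeffuantAux

open MeasureTheory ProbabilityTheory Filter in
/-- Lemma 7 of Lanchier–Li: let `T⋆` be the first time at which all pairwise
opinion distances lie outside `[τ/2, τ]`.  Almost surely, if at time `T⋆` some
vertex is within distance less than `τ` of every possible opinion of `Δ`
(in the `sSup` sense), then consensus occurs: the maximal pairwise opinion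
distance converges to `0`. -/
theorem deffuant_consensus_event_inclusion
    (Ω : Type) [MeasurableSpace Ω]
    (P : MeasureTheory.Measure Ω) [MeasureTheory.IsProbabilityMeasure P]
    (d : ℕ) (nrm : (Fin d → ℝ) → ℝ)
    (nrm_smul : ∀ (t : ℝ) (v : Fin d → ℝ), nrm (t • v) = |t| * nrm v)
    (nrm_triangle : ∀ v w : Fin d → ℝ, nrm (v + w) ≤ nrm v + nrm w)
    (nrm_eq_zero : ∀ v : Fin d → ℝ, nrm v = 0 → v = 0)
    -- the opinion space: a bounded convex subset of ℝ^d
    (Δ : Set (Fin d → ℝ)) (hΔconv : Convex ℝ Δ) (hΔbdd : Bornology.IsBounded Δ)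
    -- the social network: a finite connected graph
    (V : Type) [Fintype V] [DecidableEq V] [MeasurableSpace V] [MeasurableSingletonClass V]
    (G : SimpleGraph V) [DecidableRel G.Adj] (hG : G.Connected)
    -- confidence threshold and convergence parameter
    (τ : ℝ) (hτ : 0 < τ) (μ : ℝ) (hμ0 : 0 < μ) (hμ2 : μ ≤ 1 / 2)
    -- the process `ξ` and the sequence `e` of randomly selected edges
    (ξ : ℕ → V → Ω → (Fin d → ℝ)) (e : ℕ → Ω → V × V)
    (hmeasξ : ∀ n x, Measurable (ξ n x)) (hmease : ∀ n, Measurable (e n))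
    -- the initial opinions take values in Δ, are i.i.d. with common law `μX`
    (hξ0 : ∀ x ω, ξ 0 x ω ∈ Δ)
    (μX : MeasureTheory.Measure (Fin d → ℝ))
    (hlaw : ∀ x, MeasureTheory.Measure.map (ξ 0 x) P = μX)
    -- each step an edge is chosen uniformly at random, independently of the past
    -- and of the initial opinions
    (hedge_adj : ∀ n ω, G.Adj (e n ω).1 (e n ω).2)
    (hedge_unif : ∀ (n : ℕ) (p : V × V), G.Adj p.1 p.2 →
      P {ω | e n ω = p}
        = 1 / ((Finset.univ.filter fun q : V × V => G.Adj q.1 q.2).card : ENNReal))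
    (hindep : ProbabilityTheory.iIndepFun
      (β := fun i : V ⊕ ℕ => match i with
        | Sum.inl _ => Fin d → ℝ
        | Sum.inr _ => V × V)
      (m := fun i => match i with
        | Sum.inl _ => inferInstance
        | Sum.inr _ => inferInstance)
      (fun i => match i with
        | Sum.inl x => ξ 0 x
        | Sum.inr n => e n) P)
    -- the dynamics: neighbors interact if and only if their opinion distance does
    -- not exceed the confidence threshold, resulting in partial averaging
    (hdyn : ∀ (n : ℕ) (ω : Ω),
      (nrm (ξ n (e n ω).1 ω - ξ n (e n ω).2 ω) ≤ τ →
        ξ (n + 1) (e n ω).1 ω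
            = ξ n (e n ω).1 ω + μ • (ξ n (e n ω).2 ω - ξ n (e n ω).1 ω) ∧
          ξ (n + 1) (e n ω).2 ω
            = ξ n (e n ω).2 ω + μ • (ξ n (e n ω).1 ω - ξ n (e n ω).2 ω) ∧
          ∀ z, z ≠ (e n ω).1 → z ≠ (e n ω).2 → ξ (n + 1) z ω = ξ n z ω) ∧
      (τ < nrm (ξ n (e n ω).1 ω - ξ n (e n ω).2 ω) →
        ∀ z, ξ (n + 1) z ω = ξ n z ω))
    :
    ∀ᵐ ω ∂P, ∀ n : ℕ,
      ((∀ x y : V, nrm (ξ n x ω - ξ n y ω) ∉ Set.Icc (τ / 2) τ) ∧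
        (∀ m : ℕ, (∀ x y : V, nrm (ξ m x ω - ξ m y ω) ∉ Set.Icc (τ / 2) τ) → n ≤ m)) →
      (∃ x : V, sSup {t : ℝ | ∃ c ∈ Δ, t = nrm (ξ n x ω - c)} < τ) →
      Filter.Tendsto (fun k : ℕ => ⨆ x : V, ⨆ y : V, nrm (ξ k x ω - ξ k y ω))
        Filter.atTop (nhds 0) := by
  classical
  have hnz : nrm 0 = 0 := deff_nrm_zero nrm_smul
  have hnn : ∀ v, 0 ≤ nrm v := deff_nrm_nonneg nrm_smul nrm_triangle
  have hμ1 : μ ≤ 1 := by linarith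
  by_cases hVne : Nonempty V
  swap
  · refine Filter.Eventually.of_forall fun ω n _ hx => ?_
    obtain ⟨x, -⟩ := hx
    exact absurd ⟨x⟩ hVne
  haveI := hVne
  by_cases hsub : ∀ x y : V, x = y
  · refine Filter.Eventually.of_forall fun ω n _ _ => ?_
    have h0 : (fun k : ℕ => ⨆ x : V, ⨆ y : V, nrm (ξ k x ω - ξ k y ω)) = fun _ => 0 := by
      funext k
      have hz : ∀ x y : V, nrm (ξ k x ω - ξ k y ω) = 0 := by
        intro x y; rw [hsub x y, sub_self, hnz]
      simp only [hz, ciSup_const]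
    rw [h0]
    exact tendsto_const_nhds
  push_neg at hsub
  obtain ⟨v1, v2, hv12⟩ := hsub
  -- a walk covering all the vertices
  obtain ⟨bv, pw, hp⟩ := deff_exists_cover_walk hG (Classical.arbitrary V)
    (Finset.univ.toList (α := V))
  have hsupp : ∀ v : V, v ∈ pw.support := fun v =>
    hp v (by simp [Finset.mem_toList])
  set L : ℕ := pw.length with hLdef
  set w : ℕ → V := fun i => pw.getVert i with hwdef
  have hcov : ∀ v : V, ∃ k, k ≤ L ∧ w k = v := by
    intro v
    obtain ⟨k, hk1, hk2⟩ := SimpleGraph.Walk.mem_support_iff_exists_getVert.mp (hsupp v)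
    exact ⟨k, hk2, hk1⟩
  have hadjw : ∀ i, i < L → G.Adj (w i) (w (i + 1)) := fun i hi =>
    pw.adj_getVert_succ hi
  have hL : 0 < L := by
    by_contra hL0
    push_neg at hL0
    interval_cases L
    · obtain ⟨k1, hk1, hw1⟩ := hcov v1
      obtain ⟨k2, hk2, hw2⟩ := hcov v2
      interval_cases k1
      interval_cases k2
      exact hv12 (hw1 ▸ hw2 ▸ rfl)
  -- the probability space events
  set q : ENNReal := 1 / ((Finset.univ.filter fun q : V × V => G.Adj q.1 q.2).card : ENNReal)
    with hqdef
  set g : ℕ → V × V := fun t => (w (t % L), w (t % L + 1)) with hgdef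
  have hgadj : ∀ t, G.Adj (g t).1 (g t).2 := fun t => hadjw _ (Nat.mod_lt _ hL)
  set C : ℕ → Set Ω := fun t => e t ⁻¹' {g t} with hCdef
  have hCmeas : ∀ t, MeasurableSet (C t) := fun t => (hmease t) (measurableSet_singleton _)
  set B : ℕ → Set Ω := fun j => ⋂ t ∈ Finset.Ico (j * L) (j * L + L), C t with hBdef
  have hcyl : ∀ F : Finset ℕ, P (⋂ t ∈ F, C t) = q ^ F.card := by
    intro F
    have hinj : ∀ t ∈ F, ∀ t' ∈ F, (Sum.inr t : V ⊕ ℕ) = Sum.inr t' → t = t' :=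
      fun t _ t' _ h => Sum.inr.inj h
    have key := hindep.measure_inter_preimage_eq_mul (S := F.image Sum.inr)
      (sets := fun i => match i with
        | Sum.inl _ => (Set.univ : Set (Fin d → ℝ))
        | Sum.inr t => ({g t} : Set (V × V)))
      (by
        rintro (x | t) hi
        · exact MeasurableSet.univ
        · exact measurableSet_singleton _)
    have himg : ∀ s : (V ⊕ ℕ) → Set Ω,
        (⋂ i ∈ F.image Sum.inr, s i) = ⋂ t ∈ F, s (Sum.inr t) := by
      intro s; ext ω'
      simp only [Set.mem_iInter, Finset.mem_image]
      constructor
      · intro h t ht; exact h _ ⟨t, ht, rfl⟩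
      · rintro h i ⟨t, ht, rfl⟩; exact h t ht
    rw [himg, Finset.prod_image hinj] at key
    have key2 : P (⋂ t ∈ F, C t) = ∏ t ∈ F, P (C t) := key
    have hone : ∀ t : ℕ, P (C t) = q := by
      intro t
      have hset : C t = {ω | e t ω = g t} := by
        rw [hCdef]; ext ω'; simp [Set.mem_preimage]
      rw [hset, hqdef]
      exact hedge_unif t (g t) (hgadj t)
    rw [key2, Finset.prod_congr rfl fun t _ => hone t, Finset.prod_const]
  have hPB : ∀ j, P (B j) = q ^ L := by
    intro j
    rw [hBdef]
    rw [hcyl (Finset.Ico (j * L) (j * L + L))]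
    congr 1
    rw [Nat.card_Ico]
    omega
  have hBmeas : ∀ j, MeasurableSet (B j) := fun j =>
    Finset.measurableSet_biInter _ fun t _ => hCmeas t
  have hdisj : ∀ i j : ℕ, i ≠ j →
      Disjoint (Finset.Ico (i * L) (i * L + L)) (Finset.Ico (j * L) (j * L + L)) := by
    intro i j hij
    rw [Finset.disjoint_left]
    intro t hti htj
    simp only [Finset.mem_Ico] at hti htj
    rcases Nat.lt_or_ge i j with h | h
    · have : i * L + L ≤ j * L := by
        calc i * L + L = (i + 1) * L := by ring
        _ ≤ j * L := Nat.mul_le_mul_right _ (Nat.succ_le_of_lt h)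
      omega
    · have hj : j < i := lt_of_le_of_ne h (Ne.symm hij)
      have : j * L + L ≤ i * L := by
        calc j * L + L = (j + 1) * L := by ring
        _ ≤ i * L := Nat.mul_le_mul_right _ (Nat.succ_le_of_lt hj)
      omega
  have hIS : ProbabilityTheory.iIndepSets (fun j : ℕ => {B j}) P := by
    rw [ProbabilityTheory.iIndepSets_iff]
    intro S f hf
    have hfB : ∀ j ∈ S, f j = B j := fun j hj => hf j hj
    have h1 : (⋂ j ∈ S, f j)
        = ⋂ t ∈ S.biUnion (fun j => Finset.Ico (j * L) (j * L + L)), C t := by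
      ext ω
      simp only [Set.mem_iInter, Finset.mem_biUnion]
      constructor
      · rintro h t ⟨j, hj, ht⟩
        have hj' := h j hj
        rw [hfB j hj, hBdef] at hj'
        simp only [Set.mem_iInter] at hj'
        exact hj' t ht
      · intro h j hj
        rw [hfB j hj, hBdef]
        simp only [Set.mem_iInter]
        intro t ht
        exact h t ⟨j, hj, ht⟩
    rw [h1, hcyl]
    have hcard : (S.biUnion fun j => Finset.Ico (j * L) (j * L + L)).card = S.card * L := by
      rw [Finset.card_biUnion (fun i _ j _ hij => hdisj i j hij)]
      have hc : ∀ j ∈ S, (Finset.Ico (j * L) (j * L + L)).card = L := fun j _ => by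
        rw [Nat.card_Ico]; omega
      rw [Finset.sum_congr rfl hc, Finset.sum_const, smul_eq_mul]
    rw [hcard, mul_comm, pow_mul]
    rw [Finset.prod_congr rfl (fun j hj => by rw [hfB j hj, hPB j])]
    rw [Finset.prod_const]
  have hq0 : q ^ L ≠ 0 := by
    apply pow_ne_zero
    rw [hqdef]
    simp [ENNReal.div_eq_zero_iff]
  have hIB : ProbabilityTheory.iIndepSet B P := by
    rw [ProbabilityTheory.iIndepSet_iff_iIndep]
    exact ProbabilityTheory.iIndepSets.iIndep
      (m := fun j => MeasurableSpace.generateFrom {B j})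
      (fun j => MeasurableSpace.generateFrom_le (by
        rintro t ht
        rw [Set.mem_singleton_iff] at ht
        rw [ht]; exact hBmeas j))
      (fun j => {B j}) (fun j => IsPiSystem.singleton _) (fun j => rfl) hIS
  have hsum : (∑' j : ℕ, P (B j)) = ⊤ := by
    rw [tsum_congr hPB]
    exact ENNReal.tsum_const_eq_top_of_ne_zero hq0
  have honeP : P (Filter.limsup B Filter.atTop) = 1 :=
    ProbabilityTheory.measure_limsup_eq_one hBmeas hIB hsum
  have hae : ∀ᵐ ω ∂P, ω ∈ Filter.limsup B Filter.atTop := by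
    rw [MeasureTheory.ae_mem_iff_measure_eq
      (MeasurableSet.measurableSet_limsup hBmeas).nullMeasurableSet]
    rw [honeP, measure_univ]
  -- the main argument, for a fixed good ω
  filter_upwards [hae] with ω hω
  rintro n ⟨hout, -⟩ ⟨x0, hx0⟩
  have hfreq : ∃ᶠ jb in Filter.atTop, ω ∈ B jb :=
    Filter.mem_limsup_iff_frequently_mem.mp hω
  have hstep : ∀ t, DefStep nrm τ μ (fun z => ξ t z ω) (fun z => ξ (t + 1) z ω) (e t ω) :=
    fun t => hdyn t ω
  have hΔall : ∀ t z, ξ t z ω ∈ Δ := by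
    intro t
    induction t with
    | zero => exact fun z => hξ0 z ω
    | succ t ih => exact DefStep.memΔ hμ0.le hμ1 hΔconv (hstep t) ih
  -- bounds for the sSup set
  obtain ⟨R, hR⟩ := isBounded_iff_forall_norm_le.mp hΔbdd
  have hBdd : BddAbove {t : ℝ | ∃ c ∈ Δ, t = nrm (ξ n x0 ω - c)} := by
    refine ⟨∑ i : Fin d, (R + R) * nrm (fun j => if i = j then 1 else 0), ?_⟩
    rintro t ⟨c, hc, rfl⟩
    refine (deff_nrm_decomp nrm_smul nrm_triangle _).trans (Finset.sum_le_sum fun i _ => ?_)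
    refine mul_le_mul_of_nonneg_right ?_ (hnn _)
    have h1 : |ξ n x0 ω i| ≤ R := by
      have := norm_le_pi_norm (ξ n x0 ω) i
      have h2 := hR _ (hΔall n x0)
      rw [Real.norm_eq_abs] at this
      linarith
    have h2 : |c i| ≤ R := by
      have := norm_le_pi_norm c i
      have h3 := hR _ hc
      rw [Real.norm_eq_abs] at this
      linarith
    calc |(ξ n x0 ω - c) i| = |ξ n x0 ω i - c i| := by rw [Pi.sub_apply]
    _ ≤ |ξ n x0 ω i| + |c i| := abs_sub _ _
    _ ≤ R + R := by linarith
  have hball_n : ∀ z, nrm (ξ n z ω - ξ n x0 ω) ≤ τ / 2 := by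
    intro z
    have hmem : nrm (ξ n x0 ω - ξ n z ω) ∈ {t | ∃ c ∈ Δ, t = nrm (ξ n x0 ω - c)} :=
      ⟨ξ n z ω, hΔall n z, rfl⟩
    have hlt : nrm (ξ n x0 ω - ξ n z ω) < τ := lt_of_le_of_lt (le_csSup hBdd hmem) hx0
    have hv : nrm (ξ n z ω - ξ n x0 ω) < τ := by
      rw [deff_nrm_sub_comm nrm_smul]; exact hlt
    have hni := hout z x0
    simp only [Set.mem_Icc, not_and, not_le] at hni
    by_contra hcon
    push_neg at hcon
    exact absurd (hni hcon.le) (not_lt.mpr hv.le)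
  have hballs : ∀ i z, nrm (ξ (n + i) z ω - ξ n x0 ω) ≤ τ / 2 := by
    intro i
    induction i with
    | zero => exact hball_n
    | succ i ih =>
        exact DefStep.ball nrm_smul nrm_triangle hμ0.le hμ1 (hstep (n + i)) ih
  have hball_t : ∀ t, n ≤ t → ∀ z, nrm (ξ t z ω - ξ n x0 ω) ≤ τ / 2 := by
    intro t ht z
    have := hballs (t - n) z
    rwa [Nat.add_sub_cancel' ht] at this
  have hint_all : ∀ t, n ≤ t → ∀ y z : V, nrm (ξ t y ω - ξ t z ω) ≤ τ := by
    intro t ht y z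
    have h1 := hball_t t ht y
    have h2 := hball_t t ht z
    have h2' : nrm (ξ n x0 ω - ξ t z ω) ≤ τ / 2 := by
      rw [deff_nrm_sub_comm nrm_smul]; exact h2
    have h3 := nrm_triangle (ξ t y ω - ξ n x0 ω) (ξ n x0 ω - ξ t z ω)
    have heq : (ξ t y ω - ξ n x0 ω) + (ξ n x0 ω - ξ t z ω) = ξ t y ω - ξ t z ω := by module
    rw [heq] at h3
    linarith
  -- coordinatewise max and min
  have hFne : (Finset.univ : Finset V).Nonempty := Finset.univ_nonempty
  set Mf : Fin d → ℕ → ℝ := fun j t => Finset.univ.sup' hFne (fun z => ξ t z ω j) with hMfdef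
  set mf : Fin d → ℕ → ℝ := fun j t => Finset.univ.inf' hFne (fun z => ξ t z ω j) with hmfdef
  have hMle : ∀ j t z, ξ t z ω j ≤ Mf j t := fun j t z => by
    rw [hMfdef]; exact Finset.le_sup' (fun z => ξ t z ω j) (Finset.mem_univ z)
  have hmle : ∀ j t z, mf j t ≤ ξ t z ω j := fun j t z => by
    rw [hmfdef]; exact Finset.inf'_le (fun z => ξ t z ω j) (Finset.mem_univ z)
  have hMstep : ∀ j t, Mf j (t + 1) ≤ Mf j t := fun j t => by
    have h := DefStep.upper hμ0.le hμ1 (hstep t) j (hMle j t)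
    conv_lhs => rw [hMfdef]
    exact Finset.sup'_le _ _ fun z _ => h z
  have hmstep : ∀ j t, mf j t ≤ mf j (t + 1) := fun j t => by
    have h := DefStep.lower hμ0.le hμ1 (hstep t) j (hmle j t)
    conv_rhs => rw [hmfdef]
    exact Finset.le_inf' _ _ fun z _ => h z
  have hManti : ∀ j, Antitone (Mf j) := fun j => antitone_nat_of_succ_le (hMstep j)
  have hmmono : ∀ j, Monotone (mf j) := fun j => monotone_nat_of_le_succ (hmstep j)
  have hgnonneg : ∀ j t, 0 ≤ Mf j t - mf j t := by
    intro j t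
    obtain ⟨z⟩ := hVne
    linarith [hMle j t z, hmle j t z]
  -- the contraction at a good block
  have hblock : ∀ jb : ℕ, ω ∈ B jb → n ≤ jb * L → ∀ j : Fin d,
      Mf j (jb * L + L) - mf j (jb * L + L) ≤ (1 - μ ^ L) * (Mf j (jb * L) - mf j (jb * L)) := by
    intro jb hmem hn j
    have hpat : ∀ i, i < L → e (jb * L + i) ω = (w i, w (i + 1)) := by
      intro i hi
      rw [hBdef] at hmem
      simp only [Set.mem_iInter] at hmem
      have hC := hmem (jb * L + i) (by rw [Finset.mem_Ico]; omega)
      rw [hCdef] at hC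
      simp only [Set.mem_preimage, Set.mem_singleton_iff] at hC
      rw [hC, hgdef]
      have hmod : (jb * L + i) % L = i := by
        have h1 : jb * L + i = i + jb * L := by omega
        rw [h1, Nat.add_mul_mod_self_right]
        exact Nat.mod_eq_of_lt hi
      show (w ((jb * L + i) % L), w ((jb * L + i) % L + 1)) = (w i, w (i + 1))
      rw [hmod]
    have hintb : ∀ i, i < L →
        nrm ((fun z => ξ (jb * L + i) z ω) (w i) - (fun z => ξ (jb * L + i) z ω) (w (i + 1))) ≤ τ :=
      fun i hi => hint_all (jb * L + i) (by omega) _ _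
    have hcon := deff_contract hμ0 hμ2 (fun t z => ξ t z ω) (fun t => e t ω) hstep
      (jb * L) L w hpat hintb j (Mf j (jb * L)) (mf j (jb * L))
      (fun z => hMle j (jb * L) z) (fun z => hmle j (jb * L) z) L le_rfl
    obtain ⟨-, hvis⟩ := hcon
    have hub : Mf j (jb * L + L) ≤ Mf j (jb * L) - μ ^ L * (Mf j (jb * L) - ξ (jb * L) (w 0) ω j) := by
      conv_lhs => rw [hMfdef]
      apply Finset.sup'_le
      intro z _
      obtain ⟨k, hk, hwk⟩ := hcov z
      have := (hvis k hk).1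
      rw [hwk] at this
      exact this
    have hlb : mf j (jb * L) + μ ^ L * (ξ (jb * L) (w 0) ω j - mf j (jb * L)) ≤ mf j (jb * L + L) := by
      conv_rhs => rw [hmfdef]
      apply Finset.le_inf'
      intro z _
      obtain ⟨k, hk, hwk⟩ := hcov z
      have := (hvis k hk).2
      rw [hwk] at this
      exact this
    have hcM := hMle j (jb * L) (w 0)
    have hcm := hmle j (jb * L) (w 0)
    nlinarith [hub, hlb]
  have hLpos : 0 < μ ^ L := pow_pos hμ0 L
  have hLle1 : μ ^ L ≤ 1 := pow_le_one₀ hμ0.le hμ1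
  -- iterate the contraction
  have hiter : ∀ Kn : ℕ, ∃ t, n ≤ t ∧
      ∀ j, Mf j t - mf j t ≤ (1 - μ ^ L) ^ Kn * (Mf j n - mf j n) := by
    intro Kn
    induction Kn with
    | zero => exact ⟨n, le_rfl, fun j => by simp⟩
    | succ Kn ih =>
        obtain ⟨t, hnt, hb⟩ := ih
        obtain ⟨jb, hjb, hmemB⟩ := Filter.frequently_atTop.mp hfreq (t + 1)
        have hm : t ≤ jb * L := le_trans (le_trans (Nat.le_succ t) hjb)
          (Nat.le_mul_of_pos_right jb hL)
        refine ⟨jb * L + L, by omega, fun j => ?_⟩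
        have h1 := hblock jb hmemB (by omega) j
        have h2 : Mf j (jb * L) - mf j (jb * L) ≤ Mf j t - mf j t := by
          have hM2 := hManti j hm
          have hm2 := hmmono j hm
          linarith
        calc Mf j (jb * L + L) - mf j (jb * L + L)
            ≤ (1 - μ ^ L) * (Mf j (jb * L) - mf j (jb * L)) := h1
        _ ≤ (1 - μ ^ L) * ((1 - μ ^ L) ^ Kn * (Mf j n - mf j n)) := by
            apply mul_le_mul_of_nonneg_left (le_trans h2 (hb j)) (by linarith)
        _ = (1 - μ ^ L) ^ (Kn + 1) * (Mf j n - mf j n) := by ring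
  -- each coordinate gap tends to 0
  have hgj : ∀ j : Fin d, Filter.Tendsto (fun t => Mf j t - mf j t) Filter.atTop (nhds 0) := by
    intro j
    rw [Metric.tendsto_atTop]
    intro ε hε
    have hpow0 : Filter.Tendsto (fun Kn : ℕ => (1 - μ ^ L) ^ Kn * (Mf j n - mf j n))
        Filter.atTop (nhds 0) := by
      have h := tendsto_pow_atTop_nhds_zero_of_lt_one (by linarith : (0:ℝ) ≤ 1 - μ ^ L)
        (by linarith : 1 - μ ^ L < 1)
      simpa using h.mul_const (Mf j n - mf j n)
    obtain ⟨Kn, hKn⟩ := Metric.tendsto_atTop.mp hpow0 ε hε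
    obtain ⟨t0, hnt0, ht0⟩ := hiter Kn
    refine ⟨t0, fun t ht => ?_⟩
    have hmono : Mf j t - mf j t ≤ Mf j t0 - mf j t0 := by
      have hM2 := hManti j ht
      have hm2 := hmmono j ht
      linarith
    have h1 : Mf j t - mf j t ≤ (1 - μ ^ L) ^ Kn * (Mf j n - mf j n) :=
      le_trans hmono (ht0 j)
    have h2 := hKn Kn le_rfl
    rw [Real.dist_eq, sub_zero] at h2 ⊢
    rw [abs_of_nonneg (hgnonneg j t)]
    calc Mf j t - mf j t ≤ (1 - μ ^ L) ^ Kn * (Mf j n - mf j n) := h1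
    _ ≤ |(1 - μ ^ L) ^ Kn * (Mf j n - mf j n)| := le_abs_self _
    _ < ε := h2
  -- conclude via the norm bound
  have hsum0 : Filter.Tendsto
      (fun t => ∑ i : Fin d, nrm (fun j => if i = j then (1:ℝ) else 0) * (Mf i t - mf i t))
      Filter.atTop (nhds 0) := by
    have h := tendsto_finset_sum (Finset.univ : Finset (Fin d))
      (fun i _ => (hgj i).const_mul (nrm (fun j => if i = j then (1:ℝ) else 0)))
    simpa using h
  refine squeeze_zero (fun t => ?_) (fun t => ?_) hsum0
  · exact Real.iSup_nonneg fun x => Real.iSup_nonneg fun y => hnn _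
  · have hSnn : 0 ≤ ∑ i : Fin d, nrm (fun j => if i = j then (1:ℝ) else 0) * (Mf i t - mf i t) :=
      Finset.sum_nonneg fun i _ => mul_nonneg (hnn _) (hgnonneg i t)
    refine Real.iSup_le (fun x => Real.iSup_le (fun y => ?_) hSnn) hSnn
    refine (deff_nrm_decomp nrm_smul nrm_triangle _).trans (Finset.sum_le_sum fun i _ => ?_)
    have h1 : |(ξ t x ω - ξ t y ω) i| ≤ Mf i t - mf i t := by
      rw [Pi.sub_apply]
      rw [abs_sub_le_iff]
      constructor
      · linarith [hMle i t x, hmle i t y]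
      · linarith [hMle i t y, hmle i t x]
    calc |(ξ t x ω - ξ t y ω) i| * nrm (fun j => if i = j then (1:ℝ) else 0)
        ≤ (Mf i t - mf i t) * nrm (fun j => if i = j then (1:ℝ) else 0) :=
          mul_le_mul_of_nonneg_right h1 (hnn _)
    _ = nrm (fun j => if i = j then (1:ℝ) else 0) * (Mf i t - mf i t) := mul_comm _ _
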